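/- Let Γ ⊆ {Ω_ij : 1 ≤ i < j ≤ n} with associated graph G on {1,…,n} having edges {i,j} for Ω_ij ∈ Γ. Then the Lie algebra generated by Γ equals the span of {Ω_ij : i and j lie in the same connected component of G, i < j}. -/

import Mathlib

open Matrix
attribute [local instance 100] LieRing.ofAssociativeRing

/-- The standard basis element `Ω i j = E i j - E j i` of `so(n)`. -/
def Omega {n : ℕ} (i j : Fin n) : Matrix (Fin n) (Fin n) ℝ :=
  Matrix.single i j 1 - Matrix.single j i 1

/-!
The span `V` of the `Ω i j` with `i, j` in a common component of `G` is closed under the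
bracket, since `⁅Ω a b, Ω c d⁆` is a combination of `Ω`'s whose indices are joined through a
shared index (`b = c`, `a = d`, ...). Conversely `Ω i j = ⁅Ω i k, Ω k j⁆` for distinct
`i, j, k`, so along a path of `G` the Lie algebra generated by `Γ` contains every `Ω i j` of
`V`. Since `Γ` lies in `V`, both Lie algebras coincide, and `V` is already a Lie algebra.
-/

namespace LieSubalgebra

variable {R L : Type*} [CommRing R] [LieRing L] [LieAlgebra R L]

theorem lie_mem_span_of_forall_lie_mem_span {s : Set L}
    (hs : ∀ x ∈ s, ∀ y ∈ s, ⁅x, y⁆ ∈ Submodule.span R s) {x y : L}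
    (hx : x ∈ Submodule.span R s) (hy : y ∈ Submodule.span R s) :
    ⁅x, y⁆ ∈ Submodule.span R s := by
  have hle : Submodule.map₂ (LieModule.toEnd R L L : L →ₗ[R] Module.End R L)
      (Submodule.span R s) (Submodule.span R s) ≤ Submodule.span R s := by
    rw [Submodule.map₂_span_span, Submodule.span_le]
    rintro _ ⟨a, ha, b, hb, rfl⟩
    exact hs a ha b hb
  exact hle (Submodule.apply_mem_map₂ _ hx hy)

theorem coe_lieSpan_eq_span_of_forall_lie_mem_span {s : Set L}
    (hs : ∀ x ∈ s, ∀ y ∈ s, ⁅x, y⁆ ∈ Submodule.span R s) :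
    (lieSpan R L s : Submodule R L) = Submodule.span R s := by
  let K : LieSubalgebra R L :=
    { Submodule.span R s with lie_mem' := lie_mem_span_of_forall_lie_mem_span hs }
  exact le_antisymm (lieSpan_le (K := K) |>.mpr Submodule.subset_span) submodule_span_le_lieSpan

end LieSubalgebra

section Omega

variable {n : ℕ}

lemma single_one_mul_single_one (i j k l : Fin n) :
    single i j (1 : ℝ) * single k l 1 = if j = k then single i l 1 else 0 := by
  split_ifs with h
  · subst h; simp
  · exact single_mul_single_of_ne i j k h 1 (c := (1 : ℝ)) (l := Fin n)

lemma lie_Omega_Omega (a b c d : Fin n) :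
    ⁅Omega a b, Omega c d⁆ =
      (if b = c then (1 : ℝ) else 0) • Omega a d + (if a = d then (1 : ℝ) else 0) • Omega b c
        - (if b = d then (1 : ℝ) else 0) • Omega a c
        - (if a = c then (1 : ℝ) else 0) • Omega b d := by
  simp only [Omega, Ring.lie_def, sub_mul, mul_sub, single_one_mul_single_one, eq_comm,
    smul_sub, one_smul, zero_smul, ite_smul]
  split_ifs <;> subst_eqs <;> abel

@[simp]
lemma Omega_self (i : Fin n) : Omega i i = 0 := by simp [Omega]

lemma Omega_swap (i j : Fin n) : Omega j i = -Omega i j := by simp [Omega]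

lemma Omega_eq_lie {i j k : Fin n} (hik : i ≠ k) (hji : j ≠ i) (hjk : j ≠ k) :
    Omega i j = ⁅Omega i k, Omega k j⁆ := by
  simp [lie_Omega_Omega, hik, hji.symm, hjk.symm]

lemma Omega_mem_of_mem_of_mem (K : LieSubalgebra ℝ (Matrix (Fin n) (Fin n) ℝ)) {i j k : Fin n}
    (hik : Omega i k ∈ K) (hkj : Omega k j ∈ K) : Omega i j ∈ K := by
  by_cases hji : j = i
  · simp [hji, zero_mem]
  by_cases hjk : j = k
  · rwa [hjk]
  by_cases hik' : i = k
  · rwa [hik']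
  rw [Omega_eq_lie hik' hji hjk]
  exact K.lie_mem hik hkj

lemma Omega_mem_of_reachable (K : LieSubalgebra ℝ (Matrix (Fin n) (Fin n) ℝ))
    {G : SimpleGraph (Fin n)} (hG : ∀ i j, G.Adj i j → Omega i j ∈ K) {i j : Fin n}
    (h : G.Reachable i j) : Omega i j ∈ K := by
  replace h := (SimpleGraph.reachable_iff_reflTransGen i j).mp h
  induction h with
  | refl => simp [zero_mem]
  | tail _ hadj ih => exact Omega_mem_of_mem_of_mem K ih (hG _ _ hadj)

end Omega

def reachableOmegas {n : ℕ} (G : SimpleGraph (Fin n)) : Set (Matrix (Fin n) (Fin n) ℝ) :=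
  {M | ∃ i j : Fin n, i < j ∧ G.Reachable i j ∧ M = Omega i j}

section ReachableOmegas

variable {n : ℕ} {G : SimpleGraph (Fin n)}

lemma Omega_mem_span_reachableOmegas {i j : Fin n} (h : G.Reachable i j) :
    Omega i j ∈ Submodule.span ℝ (reachableOmegas G) := by
  rcases lt_trichotomy i j with hij | rfl | hji
  · exact Submodule.subset_span ⟨i, j, hij, h, rfl⟩
  · simp [zero_mem]
  · rw [Omega_swap]
    exact neg_mem (Submodule.subset_span ⟨j, i, hji, h.symm, rfl⟩)

lemma lie_mem_span_reachableOmegas {x y : Matrix (Fin n) (Fin n) ℝ}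
    (hx : x ∈ reachableOmegas G) (hy : y ∈ reachableOmegas G) :
    ⁅x, y⁆ ∈ Submodule.span ℝ (reachableOmegas G) := by
  obtain ⟨a, b, -, hab, rfl⟩ := hx
  obtain ⟨c, d, -, hcd, rfl⟩ := hy
  have ite_smul_mem : ∀ {p q r t : Fin n}, (p = q → G.Reachable r t) →
      (if p = q then (1 : ℝ) else 0) • Omega r t ∈ Submodule.span ℝ (reachableOmegas G) := by
    intro p q r t h
    split_ifs with hpq
    · exact Submodule.smul_mem _ _ (Omega_mem_span_reachableOmegas (h hpq))
    · simp [zero_mem]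
  rw [lie_Omega_Omega]
  refine sub_mem (sub_mem (add_mem (ite_smul_mem ?_) (ite_smul_mem ?_)) (ite_smul_mem ?_))
    (ite_smul_mem ?_)
  · rintro rfl; exact hab.trans hcd
  · rintro rfl; exact hab.symm.trans hcd.symm
  · rintro rfl; exact hab.trans hcd.symm
  · rintro rfl; exact hab.symm.trans hcd

end ReachableOmegas

theorem stmt14 {n : ℕ} (Γ : Set (Matrix (Fin n) (Fin n) ℝ))
    (hΓ : Γ ⊆ {M | ∃ i j : Fin n, i < j ∧ M = Omega i j}) :
    (LieSubalgebra.lieSpan ℝ (Matrix (Fin n) (Fin n) ℝ) Γ : Set (Matrix (Fin n) (Fin n) ℝ)) =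
      (Submodule.span ℝ {M : Matrix (Fin n) (Fin n) ℝ | ∃ i j : Fin n, i < j ∧
        (SimpleGraph.fromRel (fun a b : Fin n => Omega a b ∈ Γ)).Reachable i j ∧
        M = Omega i j} : Submodule ℝ (Matrix (Fin n) (Fin n) ℝ)) := by
  set G := SimpleGraph.fromRel (fun a b : Fin n => Omega a b ∈ Γ)
  have hΓS : Γ ⊆ reachableOmegas G := by
    intro M hM
    obtain ⟨i, j, hij, rfl⟩ := hΓ hM
    exact ⟨i, j, hij, (SimpleGraph.fromRel_adj _ i j |>.mpr ⟨hij.ne, .inl hM⟩).reachable, rfl⟩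
  have hSΓ : reachableOmegas G ⊆ LieSubalgebra.lieSpan ℝ _ Γ := by
    rintro _ ⟨i, j, -, hij, rfl⟩
    refine Omega_mem_of_reachable _ (fun a b hab => ?_) hij
    rcases ((SimpleGraph.fromRel_adj _ a b).mp hab).2 with h | h
    · exact LieSubalgebra.subset_lieSpan h
    · rw [Omega_swap]; exact neg_mem (LieSubalgebra.subset_lieSpan h)
  have hlieSpan : LieSubalgebra.lieSpan ℝ _ Γ = LieSubalgebra.lieSpan ℝ _ (reachableOmegas G) :=
    le_antisymm (LieSubalgebra.lieSpan_le.mpr (hΓS.trans LieSubalgebra.subset_lieSpan))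
      (LieSubalgebra.lieSpan_le.mpr hSΓ)
  have hspan := LieSubalgebra.coe_lieSpan_eq_span_of_forall_lie_mem_span (R := ℝ)
    fun _ hx _ hy => lie_mem_span_reachableOmegas (G := G) hx hy
  rw [hlieSpan]
  exact congrArg SetLike.coe hspan
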